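/- arXiv:math/0409265 — 17 statements merged into one kernel-verified Lean document; each statement's English description precedes it below -/
import Mathlib

section
/- Let G be a digroup with a bar-unit e such that every x ∈ G has a left inverse x_e^{ℓ-1} (with x_e^{ℓ-1} ⇀ x = e) and a right inverse x_e^{r-1} (with x ↼ x_e^{r-1} = e). If α is any bar-unit of G, then every element x of G has a left inverse and a right inverse with respect to α; explicitly, (α ⇀ x_e^{ℓ-1}) ⇀ x = α and x ↼ (x_e^{r-1} ↼ α) = α. -/
/-- In a digroup `G` with bar-unit `e`, left inverses `li x` and
right inverses `ri x` with respect to `e`, every bar-unit `α` admits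
one-sided inverses: `(α ⇀ li x) ⇀ x = α` and `x ↼ (ri x ↼ α) = α`. -/
theorem digroup_inverses_wrt_any_bar_unit {G : Type*} (lp rp : G → G → G)
    (d1 : ∀ x y z : G, lp x (lp y z) = lp (lp x y) z)
    (d2 : ∀ x y z : G, lp (lp x y) z = lp x (rp y z))
    (d3 : ∀ x y z : G, lp (rp x y) z = rp x (lp y z))
    (d4 : ∀ x y z : G, rp (lp x y) z = rp (rp x y) z)
    (d5 : ∀ x y z : G, rp (rp x y) z = rp x (rp y z))
    (e : G)
    (he : ∀ x : G, lp x e = x ∧ rp e x = x)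
    (li ri : G → G)
    (hli : ∀ x : G, lp (li x) x = e)
    (hri : ∀ x : G, rp x (ri x) = e)
    (α : G)
    (hα : ∀ x : G, lp x α = x ∧ rp α x = x) :
    ∀ x : G, lp (lp α (li x)) x = α ∧ rp x (rp (ri x) α) = α := by
  intro x
  constructor
  · rw [← d1, hli, (he α).1]
  · rw [← d5, hri, (he α).2]
end

section
/- Let G be a digroup with bar-unit e. Define the target center 𝒵ᵗ(G) := { z ∈ G | z↼x = x⇀z for all x ∈ G }. Then: (a) every bar-unit of G belongs to 𝒵ᵗ(G); (b) 𝒵ᵗ(G) is closed under both products ⇀ and ↼; (c) if z ∈ 𝒵ᵗ(G), l ⇀ z = e and z ↼ r = e, then l ∈ 𝒵ᵗ(G) and r ∈ 𝒵ᵗ(G). Consequently 𝒵ᵗ(G) is a subdigroup of G. -/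
/-- The target center `𝒵ᵗ(G) = {z | z↼x = x⇀z for all x}` of a
digroup contains every bar-unit, is closed under both products, and is closed
under taking one-sided inverses; hence it is a subdigroup. -/
theorem target_center_is_subdigroup {G : Type*} (lp rp : G → G → G)
    (d1 : ∀ x y z : G, lp x (lp y z) = lp (lp x y) z)
    (d2 : ∀ x y z : G, lp (lp x y) z = lp x (rp y z))
    (d3 : ∀ x y z : G, lp (rp x y) z = rp x (lp y z))
    (d4 : ∀ x y z : G, rp (lp x y) z = rp (rp x y) z)
    (d5 : ∀ x y z : G, rp (rp x y) z = rp x (rp y z))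
    (e : G)
    (he : ∀ x : G, lp x e = x ∧ rp e x = x)
    (hinv : ∀ x : G, ∃ l r : G, lp l x = e ∧ rp x r = e) :
    (∀ α : G, (∀ x : G, lp x α = x ∧ rp α x = x) →
        α ∈ {z : G | ∀ x : G, rp z x = lp x z}) ∧
    (∀ z ∈ {z : G | ∀ x : G, rp z x = lp x z},
      ∀ w ∈ {z : G | ∀ x : G, rp z x = lp x z},
        lp z w ∈ {z : G | ∀ x : G, rp z x = lp x z} ∧
        rp z w ∈ {z : G | ∀ x : G, rp z x = lp x z}) ∧
    (∀ z ∈ {z : G | ∀ x : G, rp z x = lp x z}, ∀ l r : G,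
        lp l z = e → rp z r = e →
        l ∈ {z : G | ∀ x : G, rp z x = lp x z} ∧
        r ∈ {z : G | ∀ x : G, rp z x = lp x z}) := by
  -- Key lemma: if z is central and lp l z = e then l is central.
  have key : ∀ z : G, (∀ x : G, rp z x = lp x z) → ∀ l : G, lp l z = e →
      ∀ x : G, rp l x = lp x l := by
    intro z hz l hl x
    -- (★) x = rp l (lp x z)
    have star : ∀ x : G, rp l (lp x z) = x := by
      intro x
      calc rp l (lp x z) = rp l (rp z x) := by rw [hz]
        _ = rp (rp l z) x := (d5 l z x).symm
        _ = rp (lp l z) x := (d4 l z x).symm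
        _ = rp e x := by rw [hl]
        _ = x := (he x).2
    -- (★★) x = lp (lp x z) l
    have star2 : ∀ x : G, lp (lp x z) l = x := by
      intro x
      calc lp (lp x z) l = lp x (rp z l) := d2 x z l
        _ = lp x (lp l z) := by rw [hz]
        _ = lp x e := by rw [hl]
        _ = x := (he x).1
    calc rp l x = rp l (lp (lp x z) l) := by rw [star2]
      _ = lp (rp l (lp x z)) l := (d3 l (lp x z) l).symm
      _ = lp x l := by rw [star]
  refine ⟨?_, ?_, ?_⟩
  · intro α hα x
    rw [(hα x).2, (hα x).1]
  · intro z hz w hw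
    have main : ∀ x : G, rp (rp z w) x = lp x (lp z w) := by
      intro x
      calc rp (rp z w) x = rp z (rp w x) := d5 z w x
        _ = rp z (lp x w) := by rw [hw]
        _ = lp (rp z x) w := (d3 z x w).symm
        _ = lp (lp x z) w := by rw [hz]
        _ = lp x (lp z w) := (d1 x z w).symm
    constructor
    · intro x
      calc rp (lp z w) x = rp (rp z w) x := d4 z w x
        _ = lp x (lp z w) := main x
    · intro x
      calc rp (rp z w) x = lp x (lp z w) := main x
        _ = lp (lp x z) w := d1 x z w
        _ = lp x (rp z w) := d2 x z w
  · intro z hz l r hl hr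
    refine ⟨key z hz l hl, key z hz r ?_⟩
    rw [← hz r]; exact hr
end

section
/- Let G be a digroup with bar-unit e, let α and β be bar-units of G, and let f, g ∈ G. Let f^{ℓ-1} denote any left inverse of f (i.e. f^{ℓ-1} ⇀ f = e). Then (α⇀f) ⇀ (β⇀g) = α ⇀ (f⇀g), and (α⇀f) ↼ (β⇀g) = ((f ↼ β) ⇀ f^{ℓ-1}) ⇀ (f ⇀ g). -/
/-- In a digroup with bar-unit `e`, for bar-units `α, β` and
elements `f, g` with `f^{ℓ-1} ⇀ f = e`:
`(α⇀f) ⇀ (β⇀g) = α ⇀ (f⇀g)` and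
`(α⇀f) ↼ (β⇀g) = ((f↼β) ⇀ f^{ℓ-1}) ⇀ (f⇀g)`. -/
theorem digroup_products_of_halo_decompositions {G : Type*} (lp rp : G → G → G)
    (d1 : ∀ x y z : G, lp x (lp y z) = lp (lp x y) z)
    (d2 : ∀ x y z : G, lp (lp x y) z = lp x (rp y z))
    (d3 : ∀ x y z : G, lp (rp x y) z = rp x (lp y z))
    (d4 : ∀ x y z : G, rp (lp x y) z = rp (rp x y) z)
    (d5 : ∀ x y z : G, rp (rp x y) z = rp x (rp y z))
    (e : G)
    (he : ∀ x : G, lp x e = x ∧ rp e x = x)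
    (hinv : ∀ x : G, ∃ l r : G, lp l x = e ∧ rp x r = e)
    (α β : G)
    (hα : ∀ x : G, lp x α = x ∧ rp α x = x)
    (hβ : ∀ x : G, lp x β = x ∧ rp β x = x)
    (f g : G) (finv : G) (hfinv : lp finv f = e) :
    lp (lp α f) (lp β g) = lp α (lp f g) ∧
    rp (lp α f) (lp β g) = lp (lp (rp f β) finv) (lp f g) := by
  constructor
  · rw [← d1 α f, d1 f β g, (hβ f).1]
  · rw [d4, d5, (hα (rp f (lp β g))).2, ← d3, ← d1, d1 finv f g, hfinv,
      d1, (he (rp f β)).1]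
end

section
/- The operations ⇀ and ↼ on Δ × 𝒢 defined by (s,f) ⇀ (t,g) := (s, f∘g) and (s,f) ↼ (t,g) := (θ(f)(t), f∘g) are diassociative: for all (s,f), (t,g), (v,h) ∈ Δ × 𝒢, x⇀(y⇀z) = (x⇀y)⇀z = x⇀(y↼z), (x↼y)⇀z = x↼(y⇀z), and (x⇀y)↼z = (x↼y)↼z = x↼(y↼z), where x = (s,f), y = (t,g), z = (v,h). Explicitly, all expressions in the first chain equal (s, f∘g∘h), those in the second equal (θ(f)(t), f∘g∘h), and those in the third equal (θ(f∘g)(v), f∘g∘h). -/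
/-- Left product on `Δ × 𝒢`: `(s,f) ⇀ (t,g) = (s, f∘g)`. -/
def dlp {Δ Γ : Type*} {𝒢 : Subgroup (Equiv.Perm Γ)} (a b : Δ × 𝒢) : Δ × 𝒢 :=
  (a.1, a.2 * b.2)

/-- Right product on `Δ × 𝒢`: `(s,f) ↼ (t,g) = (θ(f)(t), f∘g)`. -/
def drp {Δ Γ : Type*} {𝒢 : Subgroup (Equiv.Perm Γ)}
    (θ : 𝒢 →* Equiv.Perm Δ) (a b : Δ × 𝒢) : Δ × 𝒢 :=
  (θ a.2 b.1, a.2 * b.2)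

/-- The operations `⇀` and `↼` on `Δ × 𝒢` are diassociative,
with the explicit values `(s, f∘g∘h)`, `(θ(f)(t), f∘g∘h)`, `(θ(f∘g)(v), f∘g∘h)`
for the three chains. -/
theorem dlp_drp_diassociative
    {Δ Γ : Type*} [Nonempty Δ] [Nonempty Γ]
    (𝒢 : Subgroup (Equiv.Perm Γ)) (θ : 𝒢 →* Equiv.Perm Δ) :
    ∀ (s t v : Δ) (f g h : 𝒢),
      dlp (s, f) (dlp (t, g) (v, h)) = ((s, f * g * h) : Δ × 𝒢) ∧
      dlp (dlp (s, f) (t, g)) (v, h) = ((s, f * g * h) : Δ × 𝒢) ∧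
      dlp (s, f) (drp θ (t, g) (v, h)) = ((s, f * g * h) : Δ × 𝒢) ∧
      dlp (drp θ (s, f) (t, g)) (v, h) = ((θ f t, f * g * h) : Δ × 𝒢) ∧
      drp θ (s, f) (dlp (t, g) (v, h)) = ((θ f t, f * g * h) : Δ × 𝒢) ∧
      drp θ (dlp (s, f) (t, g)) (v, h) = ((θ (f * g) v, f * g * h) : Δ × 𝒢) ∧
      drp θ (drp θ (s, f) (t, g)) (v, h) = ((θ (f * g) v, f * g * h) : Δ × 𝒢) ∧
      drp θ (s, f) (drp θ (t, g) (v, h)) = ((θ (f * g) v, f * g * h) : Δ × 𝒢) := by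
  intro s t v f g h
  simp [dlp, drp, mul_assoc, map_mul]
end

section
/- The set Δ × 𝒢 with the operations (s,f) ⇀ (t,g) := (s, f∘g) and (s,f) ↼ (t,g) := (θ(f)(t), f∘g) is a digroup: the operations are diassociative; the element e := (0, 1) is a bar-unit, i.e. (s,f)⇀(0,1) = (s,f) = (0,1)↼(s,f) for all (s,f); and each (s,f) has left inverse (0, f^{-1}) and right inverse (θ(f^{-1})(0), f^{-1}) with respect to e, i.e. (0,f^{-1}) ⇀ (s,f) = (0,1) and (s,f) ↼ (θ(f^{-1})(0), f^{-1}) = (0,1). -/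
/-- `Δ × 𝒢` with `⇀` and `↼` is a digroup: the operations are
diassociative, `(0,1)` is a bar-unit, and `(s,f)` has left inverse `(0,f⁻¹)`
and right inverse `(θ(f⁻¹)(0), f⁻¹)` with respect to `(0,1)`. -/
theorem transformation_digroup_is_digroup
    {Δ Γ : Type*} [Nonempty Δ] [Nonempty Γ]
    (𝒢 : Subgroup (Equiv.Perm Γ)) (θ : 𝒢 →* Equiv.Perm Δ) (zero : Δ) :
    (∀ x y z : Δ × 𝒢,
      dlp x (dlp y z) = dlp (dlp x y) z ∧
      dlp (dlp x y) z = dlp x (drp θ y z) ∧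
      dlp (drp θ x y) z = drp θ x (dlp y z) ∧
      drp θ (dlp x y) z = drp θ (drp θ x y) z ∧
      drp θ (drp θ x y) z = drp θ x (drp θ y z)) ∧
    (∀ x : Δ × 𝒢,
      dlp x ((zero, 1) : Δ × 𝒢) = x ∧ drp θ ((zero, 1) : Δ × 𝒢) x = x) ∧
    (∀ (s : Δ) (f : 𝒢),
      dlp ((zero, f⁻¹) : Δ × 𝒢) (s, f) = ((zero, 1) : Δ × 𝒢) ∧
      drp θ (s, f) ((θ f⁻¹ zero, f⁻¹) : Δ × 𝒢) = ((zero, 1) : Δ × 𝒢)) := by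
  refine ⟨fun x y z => ?_, fun x => ?_, fun s f => ?_⟩
  · refine ⟨rfl, rfl, rfl, rfl, ?_⟩
    simp only [drp, map_mul, Equiv.Perm.mul_apply, mul_assoc]
  · exact ⟨by simp [dlp], by simp [drp]⟩
  · refine ⟨by simp [dlp], ?_⟩
    simp only [drp, ← Equiv.Perm.mul_apply, ← map_mul, mul_inv_cancel, map_one,
      Equiv.Perm.one_apply]
end

section
/- In the transformation digroup ℓ_{Δ×𝒢}, an element (s,f) ∈ Δ × 𝒢 is a bar-unit (i.e. (t,g)⇀(s,f) = (t,g) = (s,f)↼(t,g) for all (t,g) ∈ Δ × 𝒢) if and only if f = 1. Hence the halo of ℓ_{Δ×𝒢} equals { (s,1) | s ∈ Δ }. -/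
/-- `(s,f)` is a bar-unit of the transformation digroup
`ℓ_{Δ×𝒢}` iff `f = 1`; hence the halo is `{(s,1) | s ∈ Δ}`. -/
theorem transformation_digroup_halo
    {Δ Γ : Type*} [Nonempty Δ] [Nonempty Γ]
    (𝒢 : Subgroup (Equiv.Perm Γ)) (θ : 𝒢 →* Equiv.Perm Δ) :
    (∀ (s : Δ) (f : 𝒢),
      (∀ (t : Δ) (g : 𝒢),
          dlp ((t, g) : Δ × 𝒢) (s, f) = (t, g) ∧
          drp θ ((s, f) : Δ × 𝒢) (t, g) = (t, g)) ↔ f = 1) ∧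
    {a : Δ × 𝒢 | ∀ x : Δ × 𝒢, dlp x a = x ∧ drp θ a x = x}
      = {a : Δ × 𝒢 | a.2 = 1} := by
  have key : ∀ (s : Δ) (f : 𝒢),
      (∀ (t : Δ) (g : 𝒢),
          dlp ((t, g) : Δ × 𝒢) (s, f) = (t, g) ∧
          drp θ ((s, f) : Δ × 𝒢) (t, g) = (t, g)) ↔ f = 1 := by
    intro s f
    constructor
    · intro h
      have := (h s 1).1
      simp [dlp, Prod.ext_iff] at this
      exact this
    · intro hf t g
      subst hf
      simp [dlp, drp]
  refine ⟨key, ?_⟩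
  ext ⟨s, f⟩
  simp only [Set.mem_setOf_eq]
  rw [← key s f]
  constructor
  · intro h t g; exact h (t, g)
  · intro h ⟨t, g⟩; exact h t g
end

section
/- In the transformation digroup ℓ_{Δ×𝒢}, the bar-unit (s,1) is an identity (i.e. (s,1)⇀(t,g) = (t,g)↼(s,1) for all (t,g) ∈ Δ × 𝒢) if and only if the image of θ is contained in the stabilizer of s, i.e. θ(f)(s) = s for every f ∈ 𝒢. -/
/-- The bar-unit `(s,1)` of the transformation digroup is an
identity (`(s,1)⇀x = x↼(s,1)` for all `x`) iff the image of `θ` is contained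
in the stabilizer of `s`, i.e. `θ(f)(s) = s` for every `f ∈ 𝒢`. -/
theorem transformation_digroup_identity_iff_stabilizer
    {Δ Γ : Type*} [Nonempty Δ] [Nonempty Γ]
    (𝒢 : Subgroup (Equiv.Perm Γ)) (θ : 𝒢 →* Equiv.Perm Δ) (s : Δ) :
    (∀ x : Δ × 𝒢, dlp ((s, 1) : Δ × 𝒢) x = drp θ x ((s, 1) : Δ × 𝒢)) ↔
      (∀ f : 𝒢, θ f s = s) := by
  constructor
  · intro h f
    have := h (s, f)
    simp [dlp, drp] at this
    exact this.symm
  · intro h x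
    simp [dlp, drp, h x.2]
end

section
/- A subset H of the transformation digroup ℓ_{Δ×𝒢} is a subdigroup (i.e. H contains a bar-unit of ℓ_{Δ×𝒢}, H is closed under ⇀ and ↼, and every element of H has a left inverse and a right inverse in H with respect to some bar-unit lying in H) if and only if there exist a subgroup ℋ of 𝒢 and a nonempty subset Ω of Δ with θ(h)(Ω) = Ω for every h ∈ ℋ, such that H = Ω × ℋ. -/
/-- `α` is a bar-unit of the transformation digroup `Δ × 𝒢`. -/
def IsBarUnit {Δ Γ : Type*} {𝒢 : Subgroup (Equiv.Perm Γ)}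
    (θ : 𝒢 →* Equiv.Perm Δ) (α : Δ × 𝒢) : Prop :=
  ∀ x : Δ × 𝒢, dlp x α = x ∧ drp θ α x = x

/-- `H ⊆ Δ × 𝒢` is a subdigroup of the transformation digroup
(contains a bar-unit, closed under `⇀` and `↼`, and each element has a left
and a right inverse in `H` with respect to some bar-unit lying in `H`) iff
`H = Ω × ℋ` for some subgroup `ℋ` of `𝒢` and some nonempty `Ω ⊆ Δ` with
`θ(h)(Ω) = Ω` for every `h ∈ ℋ`. -/
theorem transformation_digroup_subdigroups
    {Δ Γ : Type*} [Nonempty Δ] [Nonempty Γ]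
    (𝒢 : Subgroup (Equiv.Perm Γ)) (θ : 𝒢 →* Equiv.Perm Δ)
    (H : Set (Δ × 𝒢)) :
    ((∃ u ∈ H, IsBarUnit θ u) ∧
     (∀ a ∈ H, ∀ b ∈ H, dlp a b ∈ H ∧ drp θ a b ∈ H) ∧
     (∀ a ∈ H, ∃ u ∈ H, IsBarUnit θ u ∧
        ∃ l ∈ H, ∃ r ∈ H, dlp l a = u ∧ drp θ a r = u)) ↔
    (∃ (ℋ : Subgroup 𝒢) (Ω : Set Δ), Ω.Nonempty ∧
      (∀ h : 𝒢, h ∈ ℋ → θ h '' Ω = Ω) ∧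
      H = {a : Δ × 𝒢 | a.1 ∈ Ω ∧ a.2 ∈ ℋ}) := by
  have barunit_iff : ∀ α : Δ × 𝒢, IsBarUnit θ α ↔ α.2 = 1 := by
    intro α
    constructor
    · intro h
      have := (h (α.1, 1)).1
      have := congrArg Prod.snd this
      simpa [dlp] using this
    · intro h x
      simp [dlp, drp, h, Prod.ext_iff]
  constructor
  · rintro ⟨⟨u, huH, hu⟩, hclosed, hinv⟩
    have hu2 : u.2 = 1 := (barunit_iff u).1 hu
    -- every element's second component has its inverse realized in H
    have hinv2 : ∀ a ∈ H, ∃ l ∈ H, l.2 = a.2⁻¹ := by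
      intro a ha
      obtain ⟨v, hvH, hv, l, hlH, r, hrH, hl, hr⟩ := hinv a ha
      refine ⟨l, hlH, ?_⟩
      have hv2 := (barunit_iff v).1 hv
      have h2 : l.2 * a.2 = v.2 := congrArg Prod.snd hl
      rw [hv2] at h2
      exact eq_inv_of_mul_eq_one_left h2
    set K : Set 𝒢 := {g : 𝒢 | ∃ s, (s, g) ∈ H} with hK
    set Ω : Set Δ := {s : Δ | ∃ g, (s, g) ∈ H} with hΩ
    have hone : (1 : 𝒢) ∈ K := ⟨u.1, by rwa [show (u.1, (1:𝒢)) = u from Prod.ext rfl hu2.symm]⟩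
    have hmul : ∀ {f g : 𝒢}, f ∈ K → g ∈ K → f * g ∈ K := by
      rintro f g ⟨s, hs⟩ ⟨t, ht⟩
      exact ⟨s, (hclosed _ hs _ ht).1⟩
    have hKinv : ∀ {g : 𝒢}, g ∈ K → g⁻¹ ∈ K := by
      rintro g ⟨s, hs⟩
      obtain ⟨l, hlH, hl2⟩ := hinv2 _ hs
      exact ⟨l.1, by rwa [← hl2]⟩
    -- the rectangle property
    have hmem : ∀ s ∈ Ω, ∀ g ∈ K, (s, g) ∈ H := by
      rintro s ⟨g', hg'⟩ g ⟨t, ht⟩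
      obtain ⟨l, hlH, hl2⟩ := hinv2 _ hg'
      have h1 : (s, (1 : 𝒢)) ∈ H := by
        have := (hclosed _ hg' _ hlH).1
        simpa [dlp, hl2, mul_inv_cancel] using this
      have := (hclosed _ h1 _ ht).1
      simpa [dlp] using this
    have hΩinv : ∀ h ∈ K, ∀ s ∈ Ω, θ h s ∈ Ω := by
      intro h hh s hs
      have h1 : (s, (1 : 𝒢)) ∈ H := hmem s hs 1 hone
      have h2 : (s, h) ∈ H := hmem s hs h hh
      have := (hclosed _ h2 _ h1).2
      exact ⟨_, this⟩
    refine ⟨⟨⟨⟨K, fun ha hb => hmul ha hb⟩, hone⟩, fun ha => hKinv ha⟩, Ω,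
      ⟨u.1, u.2, by simpa using huH⟩, ?_, ?_⟩
    · intro h hh
      apply Set.eq_of_subset_of_subset
      · rintro _ ⟨s, hs, rfl⟩
        exact hΩinv h hh s hs
      · intro s hs
        refine ⟨θ h⁻¹ s, hΩinv h⁻¹ (hKinv hh) s hs, ?_⟩
        simp [map_inv]
    · ext ⟨s, g⟩
      constructor
      · intro hsg
        exact ⟨⟨g, hsg⟩, ⟨s, hsg⟩⟩
      · rintro ⟨hs, hg⟩
        exact hmem s hs g hg
  · rintro ⟨ℋ, Ω, ⟨s₀, hs₀⟩, hinvar, rfl⟩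
    have hΩmem : ∀ h ∈ ℋ, ∀ s ∈ Ω, θ h s ∈ Ω := by
      intro h hh s hs
      rw [← hinvar h hh]
      exact ⟨s, hs, rfl⟩
    refine ⟨⟨(s₀, 1), ⟨hs₀, one_mem _⟩, (barunit_iff _).2 rfl⟩, ?_, ?_⟩
    · rintro ⟨s, f⟩ ⟨hs, hf⟩ ⟨t, g⟩ ⟨ht, hg⟩
      exact ⟨⟨hs, mul_mem hf hg⟩, ⟨hΩmem f hf t ht, mul_mem hf hg⟩⟩
    · rintro ⟨s, h⟩ ⟨hs, hh⟩
      refine ⟨(s, 1), ⟨hs, one_mem _⟩, (barunit_iff _).2 rfl,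
        (s, h⁻¹), ⟨hs, inv_mem hh⟩,
        (θ h⁻¹ s, h⁻¹), ⟨hΩmem h⁻¹ (inv_mem hh) s hs, inv_mem hh⟩, ?_, ?_⟩
      · simp [dlp]
      · simp [drp, map_inv]
end

section
/- The target center of the transformation digroup ℓ_{Δ×𝒢}, namely 𝒵ᵗ := { z ∈ Δ×𝒢 | z↼x = x⇀z for all x ∈ Δ×𝒢 }, equals { (s,f) | s ∈ Δ and f ∈ ker(θ) ∩ Z(𝒢) }, where Z(𝒢) is the center of the group 𝒢. -/
/-- The target center `{z | z↼x = x⇀z for all x}` of the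
transformation digroup equals `{(s,f) | s ∈ Δ, f ∈ ker θ ∩ Z(𝒢)}`. -/
theorem transformation_digroup_target_center
    {Δ Γ : Type*} [Nonempty Δ] [Nonempty Γ]
    (𝒢 : Subgroup (Equiv.Perm Γ)) (θ : 𝒢 →* Equiv.Perm Δ) :
    {z : Δ × 𝒢 | ∀ x : Δ × 𝒢, drp θ z x = dlp x z}
      = {z : Δ × 𝒢 | z.2 ∈ θ.ker ∧ z.2 ∈ Subgroup.center 𝒢} := by
  ext ⟨s, f⟩
  simp only [Set.mem_setOf_eq, drp, dlp, Prod.mk.injEq]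
  constructor
  · intro h
    constructor
    · rw [MonoidHom.mem_ker]
      ext t
      exact (h (t, 1)).1
    · rw [Subgroup.mem_center_iff]
      intro g
      exact ((h (Classical.arbitrary Δ, g)).2).symm
  · rintro ⟨hk, hc⟩ ⟨t, g⟩
    rw [MonoidHom.mem_ker] at hk
    rw [Subgroup.mem_center_iff] at hc
    exact ⟨by rw [hk]; rfl, (hc g).symm⟩
end

section
/- The source center of the transformation digroup ℓ_{Δ×𝒢}, namely 𝒵ˢ := { z ∈ Δ×𝒢 | x↼z = z⇀x for all x ∈ Δ×𝒢 }, equals { (s,f) | s ∈ Δ with θ(g)(s) = s for all g ∈ 𝒢, and f ∈ Z(𝒢) }, where Z(𝒢) is the center of the group 𝒢. -/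
/-- The source center `{z | x↼z = z⇀x for all x}` of the
transformation digroup equals
`{(s,f) | θ(g)(s) = s for all g ∈ 𝒢, f ∈ Z(𝒢)}`. -/
theorem transformation_digroup_source_center
    {Δ Γ : Type*} [Nonempty Δ] [Nonempty Γ]
    (𝒢 : Subgroup (Equiv.Perm Γ)) (θ : 𝒢 →* Equiv.Perm Δ) :
    {z : Δ × 𝒢 | ∀ x : Δ × 𝒢, drp θ x z = dlp z x}
      = {z : Δ × 𝒢 | (∀ g : 𝒢, θ g z.1 = z.1) ∧ z.2 ∈ Subgroup.center 𝒢} := by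
  ext ⟨s, f⟩
  simp only [Set.mem_setOf_eq, drp, dlp, Prod.mk.injEq, Prod.forall,
    Subgroup.mem_center_iff]
  constructor
  · intro h
    refine ⟨fun g => (h (Classical.arbitrary Δ) g).1, fun g => ?_⟩
    exact (h (Classical.arbitrary Δ) g).2
  · intro ⟨h1, h2⟩ t g
    exact ⟨h1 g, h2 g⟩
end

section
/- Let G be a digroup with bar-unit e. For all f, g ∈ G, the image of the fiber { x ∈ G | e⇀x = e⇀g } under the left translation x ↦ f↼x equals the fiber { y ∈ G | e⇀y = e⇀(f⇀g) }. Consequently the left translation by f induces a permutation of the set of fibers of the map x ↦ e⇀x. -/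
/-- In a digroup `G` with bar-unit `e`, the left translation
`x ↦ f↼x` maps the fiber `{x | e⇀x = e⇀g}` onto the fiber
`{y | e⇀y = e⇀(f⇀g)}`; consequently it induces a permutation of the set of
fibers of `x ↦ e⇀x`. -/
theorem left_translation_permutes_fibers {G : Type*} (lp rp : G → G → G)
    (d1 : ∀ x y z : G, lp x (lp y z) = lp (lp x y) z)
    (d2 : ∀ x y z : G, lp (lp x y) z = lp x (rp y z))
    (d3 : ∀ x y z : G, lp (rp x y) z = rp x (lp y z))
    (d4 : ∀ x y z : G, rp (lp x y) z = rp (rp x y) z)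
    (d5 : ∀ x y z : G, rp (rp x y) z = rp x (rp y z))
    (e : G)
    (he : ∀ x : G, lp x e = x ∧ rp e x = x)
    (hinv : ∀ x : G, ∃ l r : G, lp l x = e ∧ rp x r = e) :
    (∀ f g : G,
      (fun x => rp f x) '' {x : G | lp e x = lp e g}
        = {y : G | lp e y = lp e (lp f g)}) ∧
    (∀ f : G, ∃ σ : Equiv {S : Set G // ∃ g : G, S = {x : G | lp e x = lp e g}}
                          {S : Set G // ∃ g : G, S = {x : G | lp e x = lp e g}},
      ∀ F : {S : Set G // ∃ g : G, S = {x : G | lp e x = lp e g}},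
        (σ F : Set G) = (fun x => rp f x) '' (F : Set G)) := by
  have hl : ∀ x, lp x e = x := fun x => (he x).1
  have hr : ∀ x, rp e x = x := fun x => (he x).2
  -- if rp f r = e then e ⇀ (f ⇀ r) = e
  have hfr : ∀ f r : G, rp f r = e → lp e (lp f r) = e := by
    intro f r h
    have h1 : lp e (lp f r) = lp e (rp f r) := by rw [d1, d2]
    rw [h1, h, hl]
  -- if rp f r = e then e ⇀ (r ⇀ f) = e
  have hrf : ∀ f r : G, rp f r = e → lp e (lp r f) = e := by
    intro f r h
    have h1 : lp (lp r f) r = r := by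
      calc lp (lp r f) r = lp r (lp f r) := (d1 r f r).symm
        _ = lp (lp r e) (lp f r) := by rw [hl]
        _ = lp r (lp e (lp f r)) := (d1 r e (lp f r)).symm
        _ = lp r e := by rw [hfr f r h]
        _ = r := hl r
    obtain ⟨l2, r2, hl2, hr2⟩ := hinv r
    have h2 : rp (lp r f) e = e := by
      calc rp (lp r f) e = rp (lp r f) (rp r r2) := by rw [hr2]
        _ = rp (rp (lp r f) r) r2 := (d5 (lp r f) r r2).symm
        _ = rp (lp (lp r f) r) r2 := (d4 (lp r f) r r2).symm
        _ = rp r r2 := by rw [h1]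
        _ = e := hr2
    calc lp e (lp r f) = lp (lp e (lp r f)) e := (hl _).symm
      _ = lp e (rp (lp r f) e) := d2 e (lp r f) e
      _ = lp e e := by rw [h2]
      _ = e := hl e
  have key : ∀ f g : G,
      (fun x => rp f x) '' {x : G | lp e x = lp e g}
        = {y : G | lp e y = lp e (lp f g)} := by
    intro f g
    ext y
    constructor
    · rintro ⟨x, hx, rfl⟩
      simp only [Set.mem_setOf_eq] at hx ⊢
      calc lp e (rp f x) = lp (lp e f) x := (d2 e f x).symm
        _ = lp e (lp f x) := (d1 e f x).symm
        _ = lp e (lp (lp f e) x) := by rw [hl]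
        _ = lp e (lp f (lp e x)) := by rw [d1 f e x]
        _ = lp e (lp f (lp e g)) := by rw [hx]
        _ = lp e (lp (lp f e) g) := by rw [d1 f e g]
        _ = lp e (lp f g) := by rw [hl]
    · intro hy
      simp only [Set.mem_setOf_eq] at hy
      obtain ⟨l, r, hlf, hfr'⟩ := hinv f
      refine ⟨rp r y, ?_, ?_⟩
      · simp only [Set.mem_setOf_eq]
        calc lp e (rp r y) = lp (lp e r) y := (d2 e r y).symm
          _ = lp e (lp r y) := (d1 e r y).symm
          _ = lp e (lp (lp r e) y) := by rw [hl]
          _ = lp e (lp r (lp e y)) := by rw [d1 r e y]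
          _ = lp e (lp r (lp e (lp f g))) := by rw [hy]
          _ = lp e (lp (lp r e) (lp f g)) := by rw [d1 r e (lp f g)]
          _ = lp e (lp r (lp f g)) := by rw [hl]
          _ = lp e (lp (lp r f) g) := by rw [d1 r f g]
          _ = lp (lp e (lp r f)) g := d1 e (lp r f) g
          _ = lp e g := by rw [hrf f r hfr']
      · show rp f (rp r y) = y
        rw [← d5, hfr', hr]
  refine ⟨key, ?_⟩
  intro f
  obtain ⟨l, r, hlf, hfr'⟩ := hinv f
  -- the two cancellation facts at the level of fibers
  have hcan1 : ∀ g : G, lp e (lp r (lp f g)) = lp e g := by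
    intro g
    calc lp e (lp r (lp f g)) = lp e (lp (lp r f) g) := by rw [d1 r f g]
      _ = lp (lp e (lp r f)) g := d1 e (lp r f) g
      _ = lp e g := by rw [hrf f r hfr']
  have hcan2 : ∀ g : G, lp e (lp f (lp r g)) = lp e g := by
    intro g
    calc lp e (lp f (lp r g)) = lp e (lp (lp f r) g) := by rw [d1 f r g]
      _ = lp (lp e (lp f r)) g := d1 e (lp f r) g
      _ = lp e g := by rw [hfr f r hfr']
  refine ⟨⟨fun F => ⟨(fun x => rp f x) '' F.1, by
        obtain ⟨g, hg⟩ := F.2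
        exact ⟨lp f g, by rw [hg, key f g]⟩⟩,
      fun F => ⟨(fun x => rp r x) '' F.1, by
        obtain ⟨g, hg⟩ := F.2
        exact ⟨lp r g, by rw [hg, key r g]⟩⟩,
      ?_, ?_⟩, fun F => rfl⟩
  · intro F
    apply Subtype.ext
    obtain ⟨g, hg⟩ := F.2
    show (fun x => rp r x) '' ((fun x => rp f x) '' F.1) = F.1
    rw [hg, key f g, key r (lp f g)]
    ext x
    simp only [Set.mem_setOf_eq, hcan1 g]
  · intro F
    apply Subtype.ext
    obtain ⟨g, hg⟩ := F.2
    show (fun x => rp f x) '' ((fun x => rp r x) '' F.1) = F.1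
    rw [hg, key r g, key f (lp r g)]
    ext x
    simp only [Set.mem_setOf_eq, hcan2 g]
end

section
/- Let G be a digroup with bar-unit e, let f ∈ G, and suppose l, r ∈ G satisfy l ⇀ f = e and f ↼ r = e. Then l = e ⇀ r, and for every x ∈ G, (f ↼ x) ⇀ l = (f ↼ x) ⇀ r; that is, the conjugation map Ψ_f(x) := f↼x⇀f^{ℓ-1} does not depend on whether a left or a right inverse of f is used. -/
/-- In a digroup with bar-unit `e`, if `l⇀f = e` and `f↼r = e`,
then `l = e⇀r`, and `(f↼x)⇀l = (f↼x)⇀r` for every `x`; i.e. the conjugation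
`Ψ_f(x) = f↼x⇀f^{ℓ-1}` does not depend on whether the left or the right
inverse of `f` is used. -/
theorem psi_independent_of_inverse_side {G : Type*} (lp rp : G → G → G)
    (d1 : ∀ x y z : G, lp x (lp y z) = lp (lp x y) z)
    (d2 : ∀ x y z : G, lp (lp x y) z = lp x (rp y z))
    (d3 : ∀ x y z : G, lp (rp x y) z = rp x (lp y z))
    (d4 : ∀ x y z : G, rp (lp x y) z = rp (rp x y) z)
    (d5 : ∀ x y z : G, rp (rp x y) z = rp x (rp y z))
    (e : G)
    (he : ∀ x : G, lp x e = x ∧ rp e x = x)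
    (hinv : ∀ x : G, ∃ l r : G, lp l x = e ∧ rp x r = e)
    (f l r : G) (hl : lp l f = e) (hr : rp f r = e) :
    l = lp e r ∧ ∀ x : G, lp (rp f x) l = lp (rp f x) r := by
  have hle : l = lp e r := by
    calc l = lp l e := ((he l).1).symm
    _ = lp l (rp f r) := by rw [hr]
    _ = lp (lp l f) r := (d2 l f r).symm
    _ = lp e r := by rw [hl]
  refine ⟨hle, fun x => ?_⟩
  calc lp (rp f x) l = lp (rp f x) (lp e r) := by rw [hle]
  _ = lp (lp (rp f x) e) r := d1 _ _ _
  _ = lp (rp f x) r := by rw [(he (rp f x)).1]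
end

section
/- Let G be a digroup with bar-unit e, let f ∈ G, and let f^{ℓ-1} be a left inverse of f (f^{ℓ-1} ⇀ f = e). Then the map Ψ_f : x ↦ f ↼ x ⇀ f^{ℓ-1} sends bar-units of G to bar-units of G, and its restriction to the halo ℏ(G) is a bijection of ℏ(G) onto itself. -/
/-- In a digroup with bar-unit `e`, if `f^{ℓ-1}⇀f = e`, then
`Ψ_f : x ↦ f↼x⇀f^{ℓ-1}` sends bar-units to bar-units, and restricts to a
bijection of the halo (the set of all bar-units) onto itself. -/
theorem psi_bijection_of_halo {G : Type*} (lp rp : G → G → G)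
    (d1 : ∀ x y z : G, lp x (lp y z) = lp (lp x y) z)
    (d2 : ∀ x y z : G, lp (lp x y) z = lp x (rp y z))
    (d3 : ∀ x y z : G, lp (rp x y) z = rp x (lp y z))
    (d4 : ∀ x y z : G, rp (lp x y) z = rp (rp x y) z)
    (d5 : ∀ x y z : G, rp (rp x y) z = rp x (rp y z))
    (e : G)
    (he : ∀ x : G, lp x e = x ∧ rp e x = x)
    (hinv : ∀ x : G, ∃ l r : G, lp l x = e ∧ rp x r = e)
    (f finv : G) (hfinv : lp finv f = e) :
    (∀ α : G, (∀ x : G, lp x α = x ∧ rp α x = x) →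
      (∀ x : G, lp x (lp (rp f α) finv) = x ∧ rp (lp (rp f α) finv) x = x)) ∧
    Set.BijOn (fun x => lp (rp f x) finv)
      {α : G | ∀ x : G, lp x α = x ∧ rp α x = x}
      {α : G | ∀ x : G, lp x α = x ∧ rp α x = x} := by
  obtain ⟨l, r, hl, hr⟩ := hinv f
  -- basic cancellation lemmas
  have L0 : ∀ z : G, lp (lp z finv) f = z := fun z => by
    rw [← d1, hfinv, (he z).1]
  have L1 : ∀ z : G, lp (lp z f) r = z := fun z => by
    rw [d2, hr, (he z).1]
  have Lfr : ∀ y : G, lp y finv = lp y r := fun y => by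
    have h := L1 (lp y finv)
    rw [L0] at h
    exact h.symm
  have L2 : ∀ z : G, lp (lp z f) finv = z := fun z => by
    rw [Lfr, L1]
  have L3 : ∀ w : G, rp finv (rp f w) = w := fun w => by
    rw [← d5, ← d4, hfinv, (he w).2]
  have L4 : ∀ w : G, rp f (rp r w) = w := fun w => by
    rw [← d5, hr, (he w).2]
  have Lfr' : ∀ x : G, rp finv x = rp r x := fun x => by
    calc rp finv x = rp finv (rp f (rp r x)) := by rw [L4]
    _ = rp r x := L3 _
  have L5 : ∀ w : G, rp f (rp finv w) = w := fun w => by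
    rw [Lfr', L4]
  -- Ψ sends bar-units to bar-units
  have hPsi : ∀ α : G, (∀ x : G, lp x α = x ∧ rp α x = x) →
      (∀ x : G, lp x (lp (rp f α) finv) = x ∧ rp (lp (rp f α) finv) x = x) := by
    intro α hα x
    constructor
    · rw [d1, ← d2, (hα (lp x f)).1, L2]
    · rw [d4, d5 f α finv, (hα finv).2, d5, L5]
  -- Φ sends bar-units to bar-units
  have hPhi : ∀ β : G, (∀ x : G, lp x β = x ∧ rp β x = x) →
      (∀ x : G, lp x (lp (rp finv β) f) = x ∧ rp (lp (rp finv β) f) x = x) := by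
    intro β hβ x
    constructor
    · rw [d1, ← d2, (hβ (lp x finv)).1, L0]
    · rw [d4, d5 finv β f, (hβ f).2, ← d4, hfinv, (he x).2]
  refine ⟨hPsi, ?_⟩
  have hinvon : Set.InvOn (fun x => lp (rp finv x) f) (fun x => lp (rp f x) finv)
      {α : G | ∀ x : G, lp x α = x ∧ rp α x = x}
      {α : G | ∀ x : G, lp x α = x ∧ rp α x = x} := by
    constructor
    · intro α _
      simp only
      rw [← d3, L3, L0]
    · intro β _
      simp only
      rw [← d3, L5, L2]
  exact hinvon.bijOn (fun α hα => hPsi α hα) (fun β hβ => hPhi β hβ)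
end

section
/- Let G be a digroup with bar-unit e, and let f, g ∈ G satisfy f ↼ e = g ↼ e. Let f^{ℓ-1} and g^{ℓ-1} be left inverses of f and g respectively (f^{ℓ-1}⇀f = e = g^{ℓ-1}⇀g). Then for every x ∈ G, f ↼ x ⇀ f^{ℓ-1} = g ↼ x ⇀ g^{ℓ-1}; in particular, if the left translations x ↦ f↼x and x ↦ g↼x coincide, then Ψ_f = Ψ_g. -/
/-- In a digroup with bar-unit `e`, if `f↼e = g↼e`,
`f^{ℓ-1}⇀f = e` and `g^{ℓ-1}⇀g = e`, then `f↼x⇀f^{ℓ-1} = g↼x⇀g^{ℓ-1}` for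
every `x`; in particular, if the left translations by `f` and `g` coincide,
then `Ψ_f = Ψ_g`. -/
theorem psi_well_defined {G : Type*} (lp rp : G → G → G)
    (d1 : ∀ x y z : G, lp x (lp y z) = lp (lp x y) z)
    (d2 : ∀ x y z : G, lp (lp x y) z = lp x (rp y z))
    (d3 : ∀ x y z : G, lp (rp x y) z = rp x (lp y z))
    (d4 : ∀ x y z : G, rp (lp x y) z = rp (rp x y) z)
    (d5 : ∀ x y z : G, rp (rp x y) z = rp x (rp y z))
    (e : G)
    (he : ∀ x : G, lp x e = x ∧ rp e x = x)
    (hinv : ∀ x : G, ∃ l r : G, lp l x = e ∧ rp x r = e)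
    (f g finv ginv : G)
    (hfg : rp f e = rp g e)
    (hfinv : lp finv f = e) (hginv : lp ginv g = e) :
    (∀ x : G, lp (rp f x) finv = lp (rp g x) ginv) ∧
    ((∀ x : G, rp f x = rp g x) →
      (fun x => lp (rp f x) finv) = (fun x => lp (rp g x) ginv)) := by
  -- left translations coincide automatically
  have hLT : ∀ x : G, rp f x = rp g x := by
    intro x
    calc rp f x = rp (lp f e) x := by rw [(he f).1]
    _ = rp (rp f e) x := d4 f e x
    _ = rp (rp g e) x := by rw [hfg]
    _ = rp (lp g e) x := (d4 g e x).symm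
    _ = rp g x := by rw [(he g).1]
  -- lp only sees the normalization of its second argument
  have hnorm : ∀ a b : G, lp a b = lp a (rp b e) := by
    intro a b
    rw [← d2, (he (lp a b)).1]
  have hfh : lp finv (rp f e) = e := by
    rw [← d2, hfinv, (he e).1]
  have hgh : lp ginv (rp f e) = e := by
    rw [hfg, ← d2, hginv, (he e).1]
  obtain ⟨l, r, -, hr⟩ := hinv (rp f e)
  have key : ∀ a : G, lp a (rp f e) = e → rp a e = rp e r := by
    intro a ha
    calc rp a e = rp a (rp (rp f e) r) := by rw [hr]
    _ = rp (rp a (rp f e)) r := (d5 a (rp f e) r).symm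
    _ = rp (lp a (rp f e)) r := (d4 a (rp f e) r).symm
    _ = rp e r := by rw [ha]
  have main : ∀ x : G, lp (rp f x) finv = lp (rp g x) ginv := by
    intro x
    rw [hnorm (rp f x) finv, hnorm (rp g x) ginv, key finv hfh, key ginv hgh, hLT x]
  exact ⟨main, fun _ => funext main⟩
end

section
/- Let G be a digroup with bar-unit e, and let f, g ∈ G with left inverses f^{ℓ-1}, g^{ℓ-1}, and let (f⇀g)^{ℓ-1} be a left inverse of f⇀g. Then Ψ_{f⇀g} = Ψ_f ∘ Ψ_g; that is, for every x ∈ G, (f⇀g) ↼ x ⇀ (f⇀g)^{ℓ-1} = f ↼ (g ↼ x ⇀ g^{ℓ-1}) ⇀ f^{ℓ-1}. -/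
/-- In a digroup with bar-unit `e`, with `f^{ℓ-1}⇀f = e`,
`g^{ℓ-1}⇀g = e` and `(f⇀g)^{ℓ-1}⇀(f⇀g) = e`, one has `Ψ_{f⇀g} = Ψ_f ∘ Ψ_g`:
`(f⇀g)↼x⇀(f⇀g)^{ℓ-1} = f↼(g↼x⇀g^{ℓ-1})⇀f^{ℓ-1}` for every `x`. -/
theorem psi_multiplicative {G : Type*} (lp rp : G → G → G)
    (d1 : ∀ x y z : G, lp x (lp y z) = lp (lp x y) z)
    (d2 : ∀ x y z : G, lp (lp x y) z = lp x (rp y z))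
    (d3 : ∀ x y z : G, lp (rp x y) z = rp x (lp y z))
    (d4 : ∀ x y z : G, rp (lp x y) z = rp (rp x y) z)
    (d5 : ∀ x y z : G, rp (rp x y) z = rp x (rp y z))
    (e : G)
    (he : ∀ x : G, lp x e = x ∧ rp e x = x)
    (hinv : ∀ x : G, ∃ l r : G, lp l x = e ∧ rp x r = e)
    (f g finv ginv fginv : G)
    (hfinv : lp finv f = e) (hginv : lp ginv g = e)
    (hfginv : lp fginv (lp f g) = e) :
    ∀ x : G, lp (rp (lp f g) x) fginv = lp (rp f (lp (rp g x) ginv)) finv := by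
  intro x
  obtain ⟨l, r, hl, hr⟩ := hinv (lp f g)
  -- any left inverse of f⇀g acts like r under left product with x
  have key : ∀ h : G, lp h (lp f g) = e → lp x h = lp x r := by
    intro h hh
    have h1 : h = lp e r := by
      calc h = lp h e := (he h).1.symm
        _ = lp h (rp (lp f g) r) := by rw [hr]
        _ = lp (lp h (lp f g)) r := (d2 _ _ _).symm
        _ = lp e r := by rw [hh]
    rw [h1, d1, (he x).1]
  have hgf : lp (lp ginv finv) (lp f g) = e := by
    rw [← d1, d1 finv f g, hfinv, d1, (he ginv).1, hginv]
  have hx : lp x fginv = lp x (lp ginv finv) := by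
    rw [key fginv hfginv, key (lp ginv finv) hgf]
  calc lp (rp (lp f g) x) fginv
      = lp (rp f (rp g x)) fginv := by rw [d4, d5]
    _ = rp f (rp g (lp x fginv)) := by rw [d3, d3]
    _ = rp f (rp g (lp x (lp ginv finv))) := by rw [hx]
    _ = lp (rp f (lp (rp g x) ginv)) finv := by
        have rhs : lp (rp f (lp (rp g x) ginv)) finv
            = rp f (rp g (lp x (lp ginv finv))) := by rw [d3, ← d1, d3]
        exact rhs.symm
end

section
/- Let G be a digroup. Then every element x of G can be written in the form x = α ⇀ f for some bar-unit α of G and some f ∈ G; explicitly, with e a bar-unit, f := e⇀x and α := x ⇀ (e⇀x)^{ℓ-1} (where (e⇀x)^{ℓ-1} is a left inverse of e⇀x), the element α is a bar-unit and α ⇀ f = x. -/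
/-- In a digroup with bar-unit `e`, every `x` can be written as
`x = α ⇀ f` with `α` a bar-unit: explicitly, with `f := e⇀x` and
`α := x ⇀ (e⇀x)^{ℓ-1}` (where `(e⇀x)^{ℓ-1} ⇀ (e⇀x) = e`), the element `α`
is a bar-unit and `α ⇀ f = x`. -/
theorem digroup_halo_decomposition {G : Type*} (lp rp : G → G → G)
    (d1 : ∀ x y z : G, lp x (lp y z) = lp (lp x y) z)
    (d2 : ∀ x y z : G, lp (lp x y) z = lp x (rp y z))
    (d3 : ∀ x y z : G, lp (rp x y) z = rp x (lp y z))
    (d4 : ∀ x y z : G, rp (lp x y) z = rp (rp x y) z)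
    (d5 : ∀ x y z : G, rp (rp x y) z = rp x (rp y z))
    (e : G)
    (he : ∀ x : G, lp x e = x ∧ rp e x = x)
    (hinv : ∀ x : G, ∃ l r : G, lp l x = e ∧ rp x r = e)
    (x exinv : G) (hexinv : lp exinv (lp e x) = e) :
    (∀ y : G, lp y (lp x exinv) = y ∧ rp (lp x exinv) y = y) ∧
    lp (lp x exinv) (lp e x) = x := by
  have he1 : ∀ z : G, lp z e = z := fun z => (he z).1
  have he2 : ∀ z : G, rp e z = z := fun z => (he z).2
  have key : ∀ w : G, lp e (lp e w) = lp e w := fun w => by rw [d1 e e w, he1 e]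
  have hba : lp (lp e exinv) (lp e x) = e := by
    rw [← d1 e exinv (lp e x), hexinv, he1 e]
  obtain ⟨c, r, hc, -⟩ := hinv (lp e exinv)
  have hab : lp (lp e x) (lp e exinv) = e := by
    calc lp (lp e x) (lp e exinv)
        = lp e (lp x (lp e exinv)) := (d1 e x (lp e exinv)).symm
      _ = lp e (lp e (lp x (lp e exinv))) := (key _).symm
      _ = lp e (lp (lp e x) (lp e exinv)) := by rw [d1 e x (lp e exinv)]
      _ = lp (lp c (lp e exinv)) (lp (lp e x) (lp e exinv)) := by rw [hc]
      _ = lp c (lp (lp e exinv) (lp (lp e x) (lp e exinv))) :=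
          (d1 c (lp e exinv) (lp (lp e x) (lp e exinv))).symm
      _ = lp c (lp (lp (lp e exinv) (lp e x)) (lp e exinv)) := by
          rw [d1 (lp e exinv) (lp e x) (lp e exinv)]
      _ = lp c (lp e (lp e exinv)) := by rw [hba]
      _ = lp c (lp e exinv) := by rw [key]
      _ = e := hc
  have hxb : lp x exinv = lp x (lp e exinv) := by rw [d1 x e exinv, he1 x]
  have h2 : lp (lp e x) exinv = e := by
    calc lp (lp e x) exinv = lp e (lp x exinv) := (d1 e x exinv).symm
      _ = lp e (lp x (lp e exinv)) := by rw [hxb]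
      _ = lp (lp e x) (lp e exinv) := d1 e x (lp e exinv)
      _ = e := hab
  refine ⟨fun y => ⟨?_, ?_⟩, ?_⟩
  · have hyx : lp y x = lp y (lp e x) := by rw [d1 y e x, he1 y]
    calc lp y (lp x exinv) = lp (lp y x) exinv := d1 y x exinv
      _ = lp (lp y (lp e x)) exinv := by rw [hyx]
      _ = lp y (lp (lp e x) exinv) := (d1 y (lp e x) exinv).symm
      _ = lp y e := by rw [h2]
      _ = y := he1 y
  · have rxw : ∀ w : G, rp x w = rp (lp e x) w := fun w => by
      rw [d4 e x w, he2 x]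
    calc rp (lp x exinv) y
        = rp (rp x exinv) y := d4 x exinv y
      _ = rp x (rp exinv y) := d5 x exinv y
      _ = rp (lp e x) (rp exinv y) := rxw _
      _ = rp (rp (lp e x) exinv) y := (d5 (lp e x) exinv y).symm
      _ = rp (lp (lp e x) exinv) y := (d4 (lp e x) exinv y).symm
      _ = y := by rw [h2, he2 y]
  · rw [← d1 x exinv (lp e x), hexinv, he1 x]
end

section
/- (Counterpart of Cayley's theorem.) Every digroup is isomorphic to a transformation digroup. Precisely: for every digroup G there exist sets Δ and Γ, a subgroup 𝒢 of the symmetric group Sym(Γ), a group homomorphism θ : 𝒢 → Sym(Δ), and an injective map λ : G → Δ × 𝒢 such that for all x, y ∈ G, λ(x ⇀ y) = λ(x) ⇀ λ(y) and λ(x ↼ y) = λ(x) ↼ λ(y), where Δ × 𝒢 carries the transformation digroup operations (s,f) ⇀ (t,g) := (s, f∘g) and (s,f) ↼ (t,g) := (θ(f)(t), f∘g). Hence λ is an isomorphism of G onto a subdigroup of the transformation digroup on Δ × Γ induced by (𝒢, θ). -/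
/-- Counterpart of Cayley's theorem: every digroup `G` is
isomorphic to a transformation digroup: there exist sets `Δ`, `Γ`, a subgroup
`𝒢` of `Sym Γ`, a group homomorphism `θ : 𝒢 →* Sym Δ`, and an injective map
`λ : G → Δ × 𝒢` preserving both products, where `Δ × 𝒢` carries the
operations `(s,f) ⇀ (t,g) = (s, f∘g)` and `(s,f) ↼ (t,g) = (θ(f)(t), f∘g)`. -/
theorem digroup_cayley {G : Type u} (lp rp : G → G → G)
    (d1 : ∀ x y z : G, lp x (lp y z) = lp (lp x y) z)
    (d2 : ∀ x y z : G, lp (lp x y) z = lp x (rp y z))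
    (d3 : ∀ x y z : G, lp (rp x y) z = rp x (lp y z))
    (d4 : ∀ x y z : G, rp (lp x y) z = rp (rp x y) z)
    (d5 : ∀ x y z : G, rp (rp x y) z = rp x (rp y z))
    (e : G)
    (he : ∀ x : G, lp x e = x ∧ rp e x = x)
    (hinv : ∀ x : G, ∃ l r : G, lp l x = e ∧ rp x r = e) :
    ∃ (Δ Γ : Type u) (𝒢 : Subgroup (Equiv.Perm Γ))
      (θ : 𝒢 →* Equiv.Perm Δ) (lam : G → Δ × 𝒢),
      Function.Injective lam ∧
      (∀ x y : G,
        lam (lp x y) = ((lam x).1, (lam x).2 * (lam y).2) ∧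
        lam (rp x y) = (θ (lam x).2 (lam y).1, (lam x).2 * (lam y).2)) := by
  classical
  have he1 : ∀ x : G, lp x e = x := fun x => (he x).1
  have he2 : ∀ x : G, rp e x = x := fun x => (he x).2
  choose linv rinv hl hr using hinv
  have hlinv : ∀ x : G, linv x = lp e (rinv x) := by
    intro x
    calc linv x = lp (linv x) e := (he1 _).symm
      _ = lp (linv x) (rp x (rinv x)) := by rw [hr]
      _ = lp (lp (linv x) x) (rinv x) := (d2 _ _ _).symm
      _ = lp e (rinv x) := by rw [hl]
  -- the group J = {a // lp e a = a}
  letI instMul : Mul {a : G // lp e a = a} :=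
    ⟨fun a b => ⟨lp a.1 b.1, by rw [d1, a.2]⟩⟩
  letI instOne : One {a : G // lp e a = a} := ⟨⟨e, he1 e⟩⟩
  letI instInv : Inv {a : G // lp e a = a} :=
    ⟨fun a => ⟨lp e (rinv a.1), by rw [d1, he1]⟩⟩
  letI instGroup : Group {a : G // lp e a = a} :=
    Group.ofLeftAxioms (fun a b c => Subtype.ext (d1 a.1 b.1 c.1).symm)
      (fun a => Subtype.ext a.2)
      (fun a => Subtype.ext (by
        show lp (lp e (rinv a.1)) a.1 = e
        rw [← hlinv, hl]))
  have hmulval : ∀ a b : {a : G // lp e a = a}, (a * b).1 = lp a.1 b.1 :=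
    fun _ _ => rfl
  have hGinv : ∀ g : {a : G // lp e a = a}, lp g.1 (g⁻¹).1 = e :=
    fun g => congrArg Subtype.val (mul_inv_cancel g)
  have hGinv' : ∀ g : {a : G // lp e a = a}, lp (g⁻¹).1 g.1 = e :=
    fun g => congrArg Subtype.val (inv_mul_cancel g)
  -- regular representation
  let ρ : {a : G // lp e a = a} →* Equiv.Perm {a : G // lp e a = a} :=
    MonoidHom.mk' (fun g => Equiv.mulLeft g)
      (fun g h => by ext x; simp [mul_assoc])
  have hρ : Function.Injective ρ := by
    intro g h hgh
    have h0 := DFunLike.congr_fun hgh (1 : {a : G // lp e a = a})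
    have h2 : g * 1 = h * 1 := h0
    simpa using h2
  -- halo facts
  have hze : ∀ z : G, lp e z = e → rp z e = e := by
    intro z hz
    have h1 := d4 e z e
    rw [hz] at h1
    simp only [he2] at h1
    exact h1.symm
  have hzu : ∀ z u : G, lp e z = e → rp z u = u := by
    intro z u hz
    calc rp z u = rp z (rp e u) := by rw [he2]
      _ = rp (rp z e) u := (d5 _ _ _).symm
      _ = rp e u := by rw [hze z hz]
      _ = u := he2 u
  have hgz : ∀ g z : G, lp e z = e → lp g z = g := by
    intro g z hz
    calc lp g z = lp (lp g e) z := by rw [he1]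
      _ = lp g (lp e z) := (d1 _ _ _).symm
      _ = lp g e := by rw [hz]
      _ = g := he1 _
  -- projections
  let Pm : G → {a : G // lp e a = a} := fun x => ⟨lp e x, by rw [d1, he1]⟩
  let Dm : G → {a : G // lp e a = e} := fun x =>
    ⟨lp x ((Pm x)⁻¹).1, by rw [d1]; exact hGinv (Pm x)⟩
  have hrec : ∀ x : G, lp (Dm x).1 (Pm x).1 = x := by
    intro x
    show lp (lp x ((Pm x)⁻¹).1) (Pm x).1 = x
    rw [← d1, hGinv', he1]
  have hPl : ∀ x y : G, Pm (lp x y) = Pm x * Pm y := by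
    intro x y
    apply Subtype.ext
    show lp e (lp x y) = lp (lp e x) (lp e y)
    rw [d1 (lp e x) e y, he1, d1]
  have hPr : ∀ x y : G, Pm (rp x y) = Pm x * Pm y := by
    intro x y
    apply Subtype.ext
    show lp e (rp x y) = lp (lp e x) (lp e y)
    rw [d1 (lp e x) e y, he1, ← d2]
  -- theta's underlying function: twisted conjugation
  have hkey : ∀ (g : {a : G // lp e a = a}) (z : {a : G // lp e a = e}),
      lp e (rp g.1 z.1) = g.1 := by
    intro g z
    rw [← d2, g.2, hgz g.1 z.1 z.2]
  let Tf : {a : G // lp e a = a} → {a : G // lp e a = e} → {a : G // lp e a = e} :=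
    fun g z => ⟨lp (rp g.1 z.1) ((g⁻¹ : _)).1, by rw [d1, hkey]; exact hGinv g⟩
  have hT1 : ∀ z, Tf 1 z = z := by
    intro z
    apply Subtype.ext
    show lp (rp e z.1) (((1 : {a : G // lp e a = a})⁻¹ : _)).1 = z.1
    rw [inv_one, he2]
    exact he1 z.1
  have hTmul : ∀ g h z, Tf (g * h) z = Tf g (Tf h z) := by
    intro g h z
    apply Subtype.ext
    show lp (rp (lp g.1 h.1) z.1) (((g * h)⁻¹ : _)).1
        = lp (rp g.1 (lp (rp h.1 z.1) ((h⁻¹ : _)).1)) ((g⁻¹ : _)).1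
    rw [mul_inv_rev]
    show lp (rp (lp g.1 h.1) z.1) (lp (h⁻¹).1 (g⁻¹).1)
        = lp (rp g.1 (lp (rp h.1 z.1) ((h⁻¹ : _)).1)) ((g⁻¹ : _)).1
    rw [d4, d5, d1, ← d3]
  let Th : {a : G // lp e a = a} →* Equiv.Perm {a : G // lp e a = e} :=
    MonoidHom.mk' (fun g =>
      { toFun := Tf g
        invFun := Tf g⁻¹
        left_inv := fun z => by rw [← hTmul, inv_mul_cancel, hT1]
        right_inv := fun z => by rw [← hTmul, mul_inv_cancel, hT1] })
      (fun g h => Equiv.ext fun z => hTmul g h z)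
  -- assemble
  refine ⟨{a : G // lp e a = e}, {a : G // lp e a = a}, ρ.range,
    Th.comp (MulEquiv.toMonoidHom (MonoidHom.ofInjective hρ).symm),
    fun x => (Dm x, ρ.rangeRestrict (Pm x)), ?_, ?_⟩
  · intro x y hxy
    have h1 : Dm x = Dm y := congrArg Prod.fst hxy
    have h2 : ρ (Pm x) = ρ (Pm y) :=
      congrArg Subtype.val (congrArg Prod.snd hxy)
    have h3 : Pm x = Pm y := hρ h2
    rw [← hrec x, ← hrec y, h1, h3]
  · intro x y
    have hth : ∀ w : G, (MonoidHom.ofInjective hρ).symm (ρ.rangeRestrict (Pm w))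
        = Pm w := by
      intro w
      rw [MulEquiv.symm_apply_eq]
      apply Subtype.ext
      simp [MonoidHom.ofInjective_apply, MonoidHom.coe_rangeRestrict]
    constructor
    · refine Prod.ext ?_ ?_
      · show Dm (lp x y) = Dm x
        apply Subtype.ext
        show lp (lp x y) ((Pm (lp x y))⁻¹).1 = lp x ((Pm x)⁻¹).1
        rw [hPl, mul_inv_rev, hmulval, d1, ← d1 x y ((Pm y)⁻¹).1, d2,
          hzu (lp y ((Pm y)⁻¹).1) ((Pm x)⁻¹).1 (Dm y).2]
      · show ρ.rangeRestrict (Pm (lp x y))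
            = ρ.rangeRestrict (Pm x) * ρ.rangeRestrict (Pm y)
        rw [hPl, map_mul]
    · refine Prod.ext ?_ ?_
      · show Dm (rp x y)
            = Th ((MonoidHom.ofInjective hρ).symm (ρ.rangeRestrict (Pm x))) (Dm y)
        rw [hth x]
        show Dm (rp x y) = Tf (Pm x) (Dm y)
        have hx1 : rp x (Dm y).1 = rp (Pm x).1 (Dm y).1 := by
          calc rp x (Dm y).1 = rp (lp (Dm x).1 (Pm x).1) (Dm y).1 := by
                rw [hrec]
            _ = rp (rp (Dm x).1 (Pm x).1) (Dm y).1 := d4 _ _ _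
            _ = rp (Dm x).1 (rp (Pm x).1 (Dm y).1) := d5 _ _ _
            _ = rp (Pm x).1 (Dm y).1 := hzu _ _ (Dm x).2
        have hxy2 : rp x y = lp (rp (Pm x).1 (Dm y).1) (Pm y).1 := by
          calc rp x y = rp x (lp (Dm y).1 (Pm y).1) := by rw [hrec]
            _ = lp (rp x (Dm y).1) (Pm y).1 := (d3 _ _ _).symm
            _ = lp (rp (Pm x).1 (Dm y).1) (Pm y).1 := by rw [hx1]
        apply Subtype.ext
        show lp (rp x y) ((Pm (rp x y))⁻¹).1
            = lp (rp (Pm x).1 (Dm y).1) ((Pm x)⁻¹).1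
        rw [hPr, mul_inv_rev, hmulval, hxy2, d1,
          ← d1 (rp (Pm x).1 (Dm y).1) (Pm y).1 ((Pm y)⁻¹).1, hGinv (Pm y), he1]
      · show ρ.rangeRestrict (Pm (rp x y))
            = ρ.rangeRestrict (Pm x) * ρ.rangeRestrict (Pm y)
        rw [hPr, map_mul]
end
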